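/- Let (p_n)_{n≥1} be a guided sequence of polynomials over ℂ: deg p_1 ≥ 1, deg p_n ≥ 2 for n ≥ 2, and with α := limsup_{n→∞} 1/(deg p_n) there exist r > 0 and h : ℂ → ℝ satisfying h(z) − α·log|z| → ∞ as |z| → ∞ such that (i) every zero of every p_n lies in the closed disk of radius r centered at 0, and (ii) there exists N > 1 such that for all n ≥ N and all ζ with |ζ| > r, (1/deg p_n)·log⁺|p_n(ζ)| > h(ζ). Then the non-autonomous filled Julia set K[(p_n)] := {z ∈ ℂ : the sequence ((p_n ∘ ⋯ ∘ p_1)(z))_{n≥1} is bounded} is non-empty and compact. -/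

import Mathlib

/-!
Evaluating the guided inequality at a single point `ξ` outside the disk of zeros with
`h ξ ≥ 0` (such points exist because `α ≥ 0`) gives `‖p_n ξ‖ > exp (h ξ) ^ d_n`, while
`‖p_n ξ‖ ≤ ‖lc p_n‖ (‖ξ‖ + r) ^ d_n`; so the leading coefficients are at least `c ^ d_n` for one
`c > 0`. Combined with `‖p_n w‖ ≥ ‖lc p_n‖ (‖w‖ - r) ^ d_n` and `d_n ≥ 2`, this yields a radius `R`
beyond which every `p_n` with `n ≥ N` at least doubles the norm. Orbits that leave the disk of
radius `R` after time `N` therefore escape, and the filled Julia set is the intersection of the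
nested sets `{z | ‖(p_{N+k} ∘ ⋯ ∘ p_1) z‖ ≤ R}`, which are compact and nonempty because these
compositions are proper and surjective.
-/

open Filter Polynomial

/-- Evaluation of the composition `p_n ∘ ⋯ ∘ p_1` at a point (`p_1` applied first);
for `n = 0` it is the identity. -/
noncomputable def compEval (p : ℕ → Polynomial ℂ) : ℕ → ℂ → ℂ
  | 0, z => z
  | n + 1, z => (p (n + 1)).eval (compEval p n z)

open Real

theorem exp_pow_lt_of_lt_mul_posLog {d : ℕ} {a x : ℝ} (ha : 0 ≤ a) (hx : 0 ≤ x)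
    (h : a < 1 / d * log⁺ x) : exp a ^ d < x := by
  rcases Nat.eq_zero_or_pos d with rfl | hd
  · simp only [Nat.cast_zero, div_zero, zero_mul] at h
    linarith
  have hlt : d * a < log⁺ x := by
    rwa [one_div, ← div_eq_inv_mul, lt_div_iff₀ (by positivity), mul_comm] at h
  have hlog : d * a < log x := by
    rcases lt_max_iff.mp hlt with h0 | h0
    · nlinarith
    · exact h0
  have hx1 : 1 < x := (log_pos_iff hx).mp (by nlinarith)
  rw [← exp_nat_mul]
  exact (lt_log_iff_exp_lt (by linarith)).mp hlog

section RootLocation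

variable {K : Type*} [NormedField K] [IsAlgClosed K] {q : K[X]} {r : ℝ}

theorem norm_eval_eq_norm_leadingCoeff_mul_prod_roots (q : K[X]) (w : K) :
    ‖q.eval w‖ = ‖q.leadingCoeff‖ * (q.roots.map (fun a => ‖w - a‖)).prod := by
  rw [(IsAlgClosed.splits q).eval_eq_prod_roots, norm_mul]
  congr 1
  simpa [Multiset.map_map] using map_multiset_prod (normHom : K →*₀ ℝ) (q.roots.map (w - ·))

theorem norm_leadingCoeff_mul_sub_pow_le_norm_eval (hroots : ∀ z, q.eval z = 0 → ‖z‖ ≤ r)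
    {w : K} (hw : r ≤ ‖w‖) : ‖q.leadingCoeff‖ * (‖w‖ - r) ^ q.natDegree ≤ ‖q.eval w‖ := by
  rw [norm_eval_eq_norm_leadingCoeff_mul_prod_roots, ← IsAlgClosed.card_roots_eq_natDegree,
    ← Multiset.prod_replicate, ← Multiset.map_const']
  gcongr
  refine Multiset.prod_map_le_prod_map₀ _ _ (fun _ _ => sub_nonneg.mpr hw) fun a ha => ?_
  have := hroots a (mem_roots'.mp ha).2
  linarith [norm_sub_norm_le w a]

theorem norm_eval_le_norm_leadingCoeff_mul_add_pow (hroots : ∀ z, q.eval z = 0 → ‖z‖ ≤ r)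
    (w : K) : ‖q.eval w‖ ≤ ‖q.leadingCoeff‖ * (‖w‖ + r) ^ q.natDegree := by
  rw [norm_eval_eq_norm_leadingCoeff_mul_prod_roots, ← IsAlgClosed.card_roots_eq_natDegree,
    ← Multiset.prod_replicate, ← Multiset.map_const']
  gcongr
  refine Multiset.prod_map_le_prod_map₀ _ _ (fun _ _ => norm_nonneg _) fun a ha => ?_
  have := hroots a (mem_roots'.mp ha).2
  linarith [norm_sub_le w a]

theorem div_norm_add_pow_le_norm_leadingCoeff (hr : 0 ≤ r)
    (hroots : ∀ z, q.eval z = 0 → ‖z‖ ≤ r) {ξ : K} (hξ : r < ‖ξ‖) {A : ℝ}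
    (hA : A ^ q.natDegree ≤ ‖q.eval ξ‖) :
    (A / (‖ξ‖ + r)) ^ q.natDegree ≤ ‖q.leadingCoeff‖ := by
  rw [div_pow, div_le_iff₀ (pow_pos (by linarith) _)]
  exact hA.trans (norm_eval_le_norm_leadingCoeff_mul_add_pow hroots ξ)

theorem two_mul_norm_le_norm_eval (hroots : ∀ z, q.eval z = 0 → ‖z‖ ≤ r)
    (hdeg : 2 ≤ q.natDegree) {c : ℝ} (hc : 0 < c) (hlc : c ^ q.natDegree ≤ ‖q.leadingCoeff‖)
    {w : K} (hw₁ : 1 ≤ ‖w‖) (hwr : 2 * r ≤ ‖w‖) (hwc : 8 ≤ c ^ 2 * ‖w‖) :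
    2 * ‖w‖ ≤ ‖q.eval w‖ := by
  set t := ‖w‖
  have half_le : c * t / 2 ≤ c * (t - r) := by nlinarith
  have sq_ge : 2 * t ≤ (c * (t - r)) ^ 2 :=
    calc 2 * t ≤ (c * t / 2) ^ 2 := by nlinarith
      _ ≤ (c * (t - r)) ^ 2 := by gcongr
  have one_le : 1 ≤ c * (t - r) := by nlinarith
  calc 2 * t ≤ (c * (t - r)) ^ 2 := sq_ge
    _ ≤ (c * (t - r)) ^ q.natDegree := pow_le_pow_right₀ one_le hdeg
    _ = c ^ q.natDegree * (t - r) ^ q.natDegree := mul_pow _ _ _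
    _ ≤ ‖q.leadingCoeff‖ * (t - r) ^ q.natDegree := by gcongr; exact pow_nonneg (by linarith) _
    _ ≤ ‖q.eval w‖ := norm_leadingCoeff_mul_sub_pow_le_norm_eval hroots (by linarith)

theorem exists_escape_radius (hr : 0 ≤ r) {ξ : K} (hξ : r < ‖ξ‖) {a : ℝ} (ha : 0 ≤ a) :
    ∃ R > 0, ∀ q : K[X], (∀ z, q.eval z = 0 → ‖z‖ ≤ r) → 2 ≤ q.natDegree →
      a < 1 / q.natDegree * log⁺ ‖q.eval ξ‖ → ∀ w : K, R < ‖w‖ → 2 * ‖w‖ ≤ ‖q.eval w‖ := by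
  set c := exp a / (‖ξ‖ + r)
  have hc : 0 < c := div_pos (exp_pos a) (by linarith)
  refine ⟨max (max 1 (2 * r)) (8 / c ^ 2), lt_max_of_lt_left (lt_max_of_lt_left one_pos),
    fun q hroots hdeg hq w hw => ?_⟩
  have hlc : c ^ q.natDegree ≤ ‖q.leadingCoeff‖ := div_norm_add_pow_le_norm_leadingCoeff hr
    hroots hξ (exp_pow_lt_of_lt_mul_posLog ha (norm_nonneg _) hq).le
  obtain ⟨⟨hw₁, hwr⟩, hwc⟩ : (1 < ‖w‖ ∧ 2 * r < ‖w‖) ∧ 8 / c ^ 2 < ‖w‖ := by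
    simpa only [max_lt_iff] using hw
  rw [div_lt_iff₀ (by positivity), mul_comm] at hwc
  exact two_mul_norm_le_norm_eval hroots hdeg hc hlc hw₁.le hwr.le hwc.le

end RootLocation

theorem limsup_one_div_natCast_nonneg {ι : Type*} {l : Filter ι} [l.NeBot] (f : ι → ℕ) :
    0 ≤ limsup (fun i => 1 / (f i : ℝ)) l :=
  le_limsup_of_frequently_le (.of_forall fun _ => by positivity)
    (isBoundedUnder_of ⟨1, fun i => by simpa using Nat.cast_inv_le_one (α := ℝ) (f i)⟩)

theorem exists_lt_norm_nonneg_of_tendsto_sub_mul_log {E : Type*} [NormedAddCommGroup E]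
    [NormedSpace ℝ E] [Nontrivial E] {h : E → ℝ} {α : ℝ} (hα : 0 ≤ α)
    (hh : Tendsto (fun z => h z - α * log ‖z‖) (comap norm atTop) atTop) (r : ℝ) :
    ∃ ξ : E, r < ‖ξ‖ ∧ 0 ≤ h ξ := by
  rw [comap_norm_atTop] at hh
  obtain ⟨ξ, hhξ, hξ⟩ := ((hh.eventually_ge_atTop 0).and
    (tendsto_norm_cobounded_atTop.eventually_gt_atTop (max r 1))).exists
  have hlog : 0 ≤ log ‖ξ‖ := log_nonneg (le_max_right r 1 |>.trans hξ.le)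
  exact ⟨ξ, (le_max_left r 1).trans_lt hξ, by nlinarith⟩

section Dynamics

variable {p : ℕ → ℂ[X]}

theorem isProperMap_compEval (hp : ∀ n ≥ 1, 0 < (p n).natDegree) (n : ℕ) :
    IsProperMap (compEval p n) := by
  induction n with
  | zero => exact isProperMap_id
  | succ n ih =>
    exact (isProperMap_eval _ (natDegree_pos_iff_degree_pos.mp (hp _ n.succ_pos))).comp ih

theorem surjective_compEval (hp : ∀ n ≥ 1, 0 < (p n).natDegree) (n : ℕ) :
    Function.Surjective (compEval p n) := by
  induction n with
  | zero => exact Function.surjective_id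
  | succ n ih => exact (IsAlgClosed.eval_surjective (hp _ n.succ_pos).ne').comp ih

theorem isCompact_setOf_norm_compEval_le (hp : ∀ n ≥ 1, 0 < (p n).natDegree) (n : ℕ) (R : ℝ) :
    IsCompact {z | ‖compEval p n z‖ ≤ R} := by
  simpa [Set.preimage] using (isProperMap_compEval hp n).isCompact_preimage
    (isCompact_closedBall (0 : ℂ) R)

def filledJulia (p : ℕ → ℂ[X]) : Set ℂ := {z | ∃ M : ℝ, ∀ n ≥ 1, ‖compEval p n z‖ ≤ M}

def IsEscapeRadius (p : ℕ → ℂ[X]) (N : ℕ) (R : ℝ) : Prop :=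
  ∀ n ≥ N, ∀ w : ℂ, R < ‖w‖ → 2 * ‖w‖ ≤ ‖(p n).eval w‖

theorem iInter_setOf_norm_compEval_le_subset_filledJulia (p : ℕ → ℂ[X]) (N : ℕ) (R : ℝ) :
    ⋂ k, {z | ‖compEval p (N + k) z‖ ≤ R} ⊆ filledJulia p := by
  intro z hz
  rw [Set.mem_iInter] at hz
  refine ⟨max R (∑ m ∈ Finset.range N, ‖compEval p m z‖), fun n _ => ?_⟩
  rcases lt_or_ge n N with hn | hn
  · exact le_max_of_le_right <| Finset.single_le_sum (fun m _ => norm_nonneg (compEval p m z))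
      (Finset.mem_range.mpr hn)
  · obtain ⟨k, rfl⟩ := Nat.exists_eq_add_of_le hn
    exact le_max_of_le_left (hz k)

namespace IsEscapeRadius

variable {N : ℕ} {R : ℝ}

theorem two_pow_mul_le_norm_compEval (hesc : IsEscapeRadius p N R) {n : ℕ} (hn : N ≤ n) {z : ℂ}
    (hz : R < ‖compEval p n z‖) (k : ℕ) :
    2 ^ k * ‖compEval p n z‖ ≤ ‖compEval p (n + k) z‖ := by
  induction k with
  | zero => simp
  | succ k ih =>
    have hk : R < ‖compEval p (n + k) z‖ :=
      hz.trans_le <| (le_mul_of_one_le_left (norm_nonneg _) (one_le_pow₀ one_le_two)).trans ih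
    calc 2 ^ (k + 1) * ‖compEval p n z‖ = 2 * (2 ^ k * ‖compEval p n z‖) := by ring
      _ ≤ 2 * ‖compEval p (n + k) z‖ := by gcongr
      _ ≤ ‖compEval p (n + k + 1) z‖ := hesc (n + k + 1) (by omega) _ hk

theorem norm_compEval_le (hesc : IsEscapeRadius p N R) (hR : 0 ≤ R) (hN : 1 ≤ N) {z : ℂ}
    (hz : z ∈ filledJulia p) {n : ℕ} (hn : N ≤ n) : ‖compEval p n z‖ ≤ R := by
  obtain ⟨M, hM⟩ := hz
  by_contra! hlt
  obtain ⟨k, hk⟩ := pow_unbounded_of_one_lt (M / ‖compEval p n z‖) one_lt_two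
  rw [div_lt_iff₀ (hR.trans_lt hlt)] at hk
  linarith [hesc.two_pow_mul_le_norm_compEval hn hlt k, hM (n + k) (by omega)]

theorem filledJulia_eq_iInter (hesc : IsEscapeRadius p N R) (hR : 0 ≤ R) (hN : 1 ≤ N) :
    filledJulia p = ⋂ k, {z | ‖compEval p (N + k) z‖ ≤ R} :=
  Set.Subset.antisymm
    (fun _ hz => Set.mem_iInter.mpr fun _ => hesc.norm_compEval_le hR hN hz (by omega))
    (iInter_setOf_norm_compEval_le_subset_filledJulia p N R)

theorem setOf_norm_compEval_succ_le_subset (hesc : IsEscapeRadius p N R) {n : ℕ}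
    (hn : N ≤ n + 1) : {z | ‖compEval p (n + 1) z‖ ≤ R} ⊆ {z | ‖compEval p n z‖ ≤ R} := by
  intro z (hz : ‖compEval p (n + 1) z‖ ≤ R)
  refine le_of_not_gt fun (hlt : R < ‖compEval p n z‖) => ?_
  have : 2 * ‖compEval p n z‖ ≤ ‖compEval p (n + 1) z‖ := hesc (n + 1) hn _ hlt
  linarith [norm_nonneg (compEval p n z)]

theorem isCompact_filledJulia (hp : ∀ n ≥ 1, 0 < (p n).natDegree) (hesc : IsEscapeRadius p N R)
    (hR : 0 ≤ R) (hN : 1 ≤ N) : IsCompact (filledJulia p) := by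
  rw [hesc.filledJulia_eq_iInter hR hN]
  exact (isCompact_setOf_norm_compEval_le hp N R).of_isClosed_subset
    (isClosed_iInter fun k => (isCompact_setOf_norm_compEval_le hp (N + k) R).isClosed)
    (Set.iInter_subset _ 0)

theorem filledJulia_nonempty (hp : ∀ n ≥ 1, 0 < (p n).natDegree) (hesc : IsEscapeRadius p N R)
    (hR : 0 ≤ R) : (filledJulia p).Nonempty := by
  refine (IsCompact.nonempty_iInter_of_sequence_nonempty_isCompact_isClosed
    (fun k => {z | ‖compEval p (N + k) z‖ ≤ R})
    (fun k => hesc.setOf_norm_compEval_succ_le_subset (n := N + k) (by omega)) (fun k => ?_)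
    (isCompact_setOf_norm_compEval_le hp N R)
    (fun k => (isCompact_setOf_norm_compEval_le hp (N + k) R).isClosed)).mono
    (iInter_setOf_norm_compEval_le_subset_filledJulia p N R)
  obtain ⟨z, hz⟩ := surjective_compEval hp (N + k) 0
  exact ⟨z, by simpa [hz] using hR⟩

end IsEscapeRadius

end Dynamics

theorem guided_julia_nonempty_compact
    (p : ℕ → Polynomial ℂ)
    (hdeg1 : 1 ≤ (p 1).natDegree)
    (hdeg : ∀ n ≥ 2, 2 ≤ (p n).natDegree)
    (α : ℝ)
    (hα : α = Filter.limsup (fun n => (1 : ℝ) / ((p n).natDegree : ℝ)) Filter.atTop)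
    (r : ℝ) (hr : 0 < r)
    (h : ℂ → ℝ)
    (hh : Filter.Tendsto (fun z : ℂ => h z - α * Real.log (‖z‖))
      (Filter.comap (fun z : ℂ => ‖z‖) Filter.atTop) Filter.atTop)
    (hzeros : ∀ n ≥ 1, ∀ z : ℂ, (p n).eval z = 0 → ‖z‖ ≤ r)
    (hguided : ∃ N : ℕ, 1 < N ∧ ∀ n ≥ N, ∀ ζ : ℂ, r < ‖ζ‖ →
      h ζ < (1 / ((p n).natDegree : ℝ)) * max 0 (Real.log (‖(p n).eval ζ‖))) :
    ({z : ℂ | ∃ M : ℝ, ∀ n ≥ 1, ‖compEval p n z‖ ≤ M}).Nonempty ∧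
    IsCompact {z : ℂ | ∃ M : ℝ, ∀ n ≥ 1, ‖compEval p n z‖ ≤ M} := by
  obtain ⟨N, hN, hguided⟩ := hguided
  have hα₀ : 0 ≤ α := hα ▸ limsup_one_div_natCast_nonneg fun n => (p n).natDegree
  obtain ⟨ξ, hξ, hhξ⟩ := exists_lt_norm_nonneg_of_tendsto_sub_mul_log hα₀ hh r
  obtain ⟨R, hR, hescape⟩ := exists_escape_radius hr.le hξ hhξ
  have hesc : IsEscapeRadius p N R := fun n hn =>
    hescape _ (hzeros n (by omega)) (hdeg n (by omega)) (hguided n hn ξ hξ)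
  have hp : ∀ n ≥ 1, 0 < (p n).natDegree := fun n hn => by
    rcases Nat.lt_or_ge n 2 with hn2 | hn2
    · obtain rfl : n = 1 := by omega
      exact hdeg1
    · exact two_pos.trans_le (hdeg n hn2)
  exact ⟨hesc.filledJulia_nonempty hp hR.le, hesc.isCompact_filledJulia hp hR.le (by omega)⟩
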